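/- Let f : ℂ → ℂ be continuously differentiable (in the real sense) and bounded, and suppose (ð₂f)(z) = 0 for every z ∈ ℂ, i.e. z ↦ (1+|z|²)²f(z) is holomorphic on ℂ. Then there exists a polynomial q over ℂ of degree at most 4 such that f(z) = q(z)/(1+|z|²)² for all z ∈ ℂ. (Hence the five functions Y_k(z) = z^k(1+|z|²)^(−2), k = 0,…,4, representing the harmonics ₂Y_{2,m}, span the ð-kernel among regular spin-weight-2 functions on the sphere.) -/

import Mathlib

/-!
The condition `ð₂ f = 0` says exactly that `g = (1+|z|²)² f` satisfies `∂_z̄ g = 0`, so by the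
Cauchy–Riemann equations `g` is entire. Boundedness of `f` gives `|g z| ≤ M (1+|z|)⁴`, and
Cauchy's estimates on circles of radius `R → ∞` kill every Taylor coefficient of `g` of order
above `4`, so `g` is a polynomial of degree at most `4`.
-/

open Complex

/-- The Wirtinger derivative `∂_z f = (1/2)(∂ₓf − i∂_yf)` of `f : ℂ → ℂ`,
viewed as a real-differentiable function on `ℝ²`. -/
noncomputable def wirtD (f : ℂ → ℂ) (z : ℂ) : ℂ :=
  (1 / 2 : ℂ) * (fderiv ℝ f z 1 - Complex.I * fderiv ℝ f z Complex.I)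

/-- The conjugate Wirtinger derivative `∂_z̄ f = (1/2)(∂ₓf + i∂_yf)`. -/
noncomputable def wirtDBar (f : ℂ → ℂ) (z : ℂ) : ℂ :=
  (1 / 2 : ℂ) * (fderiv ℝ f z 1 + Complex.I * fderiv ℝ f z Complex.I)

/-- The spin-weight-`s` Newman–Penrose operator
`(ð_s f)(z) = 2^(−1/2) (1+|z|²)^(1−s) ∂_z̄[(1+|z|²)^s f](z)`. -/
noncomputable def edth (s : ℤ) (f : ℂ → ℂ) (z : ℂ) : ℂ :=
  (Real.sqrt 2 : ℂ)⁻¹ * (1 + ‖z‖ ^ 2 : ℂ) ^ (1 - s) *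
    wirtDBar (fun w => (1 + ‖w‖ ^ 2 : ℂ) ^ s * f w) z

/-- The spin-weight-`s` Newman–Penrose operator
`(ð̄_s f)(z) = 2^(−1/2) (1+|z|²)^(1+s) ∂_z[(1+|z|²)^(−s) f](z)`. -/
noncomputable def edthBar (s : ℤ) (f : ℂ → ℂ) (z : ℂ) : ℂ :=
  (Real.sqrt 2 : ℂ)⁻¹ * (1 + ‖z‖ ^ 2 : ℂ) ^ (1 + s) *
    wirtD (fun w => (1 + ‖w‖ ^ 2 : ℂ) ^ (-s) * f w) z

/-- The representative `Y_k(z) = z^k (1+|z|²)^(−2)` of the spin-weight-2,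
`l = 2` spherical harmonic `₂Y_{2,k−2}` in the stereographic chart. -/
noncomputable def Ysph (k : ℕ) (z : ℂ) : ℂ :=
  z ^ k / (1 + ‖z‖ ^ 2 : ℂ) ^ 2

open Polynomial Metric Filter Topology
open scoped Nat

theorem differentiableAt_of_wirtDBar_eq_zero {g : ℂ → ℂ} {z : ℂ} (hg : DifferentiableAt ℝ g z)
    (h : wirtDBar g z = 0) : DifferentiableAt ℂ g z := by
  set L := fderiv ℝ g z
  have hI : L I = I * L 1 := by
    rw [wirtDBar] at h
    linear_combination (-2 * I) * h + L I * I_sq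
  refine (differentiableAt_iff_restrictScalars ℝ hg).2 ⟨L 1 • (1 : ℂ →L[ℂ] ℂ), ?_⟩
  ext w
  have hw : w = w.re • (1 : ℂ) + w.im • I := by simp [real_smul, re_add_im]
  have hL : L w = w * L 1 := by
    conv_lhs => rw [hw, map_add, map_smul, map_smul, hI]
    conv_rhs => rw [hw]
    simp only [real_smul]
    ring
  simpa [mul_comm] using hL.symm

theorem iteratedDeriv_eq_zero_of_norm_le_mul_pow {E : Type*} [NormedAddCommGroup E]
    [NormedSpace ℂ E] [CompleteSpace E] {g : ℂ → E} (hg : Differentiable ℂ g) {B : ℝ} {n k : ℕ}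
    (hB : ∀ z, ‖g z‖ ≤ B * (1 + ‖z‖) ^ n) (hk : n < k) :
    iteratedDeriv k g 0 = 0 := by
  have hB0 : 0 ≤ B := by simpa using (norm_nonneg _).trans (hB 0)
  have hbound : ∀ R ≥ (1 : ℝ), ‖iteratedDeriv k g 0‖ ≤ k ! * (B * 2 ^ n) / R := by
    intro R hR
    have hR0 : 0 < R := one_pos.trans_le hR
    have hsphere : ∀ z ∈ sphere (0 : ℂ) R, ‖g z‖ ≤ B * (2 * R) ^ n := by
      intro z hz
      rw [mem_sphere_zero_iff_norm] at hz
      refine (hB z).trans (mul_le_mul_of_nonneg_left (pow_le_pow_left₀ (by positivity) ?_ n) hB0)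
      linarith
    calc ‖iteratedDeriv k g 0‖ ≤ k ! * (B * (2 * R) ^ n) / R ^ k :=
          norm_iteratedDeriv_le_of_forall_mem_sphere_norm_le k hR0 hg.diffContOnCl hsphere
      _ ≤ k ! * (B * 2 ^ n) / R := by
        rw [div_le_div_iff₀ (by positivity) hR0, mul_pow]
        have : R ^ n * R ≤ R ^ k := pow_succ R n ▸ pow_le_pow_right₀ hR hk
        calc k ! * (B * (2 ^ n * R ^ n)) * R = k ! * (B * 2 ^ n) * (R ^ n * R) := by ring
          _ ≤ k ! * (B * 2 ^ n) * R ^ k := by gcongr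
  have hlim : Tendsto (fun R : ℝ => k ! * (B * 2 ^ n) / R) atTop (𝓝 0) :=
    tendsto_const_nhds.div_atTop tendsto_id
  exact norm_le_zero_iff.1 <| ge_of_tendsto hlim <| (eventually_ge_atTop 1).mono hbound

theorem Differentiable.exists_polynomial_of_norm_le_mul_pow {g : ℂ → ℂ} (hg : Differentiable ℂ g)
    {B : ℝ} {n : ℕ} (hB : ∀ z, ‖g z‖ ≤ B * (1 + ‖z‖) ^ n) :
    ∃ q : ℂ[X], q.degree ≤ n ∧ ∀ z, g z = q.eval z := by
  let a : ℕ → ℂ := fun k => (k ! : ℂ)⁻¹ * iteratedDeriv k g 0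
  refine ⟨∑ k : Fin (n + 1), C (a k) * X ^ (k : ℕ), Order.le_of_lt_succ (degree_sum_fin_lt _),
    fun z => ?_⟩
  let term : ℕ → ℂ := fun k => (k ! : ℂ)⁻¹ • (z - 0) ^ k • iteratedDeriv k g 0
  have hfin : HasSum term (∑ k ∈ Finset.range (n + 1), term k) :=
    hasSum_sum_of_ne_finset_zero fun k hk => by
      simp only [term, iteratedDeriv_eq_zero_of_norm_le_mul_pow hg hB (by simpa using hk),
        smul_zero]
  rw [(hasSum_taylorSeries_of_entire hg 0 z).unique hfin, eval_finsetSum,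
    ← Fin.sum_univ_eq_sum_range]
  simp [term, a, mul_comm, mul_left_comm]

theorem one_add_sq_norm_ne_zero (z : ℂ) : (1 + ‖z‖ ^ 2 : ℂ) ≠ 0 := by
  exact_mod_cast (by positivity : (0 : ℝ) < 1 + ‖z‖ ^ 2).ne'

theorem norm_one_add_sq_norm (z : ℂ) : ‖(1 + ‖z‖ ^ 2 : ℂ)‖ = 1 + ‖z‖ ^ 2 := by
  norm_cast
  exact Real.norm_of_nonneg (by positivity)

theorem differentiable_one_add_sq_norm : Differentiable ℝ fun z : ℂ => (1 + ‖z‖ ^ 2 : ℂ) := by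
  simp_rw [← ofReal_pow, ← ofReal_one, ← ofReal_add]
  exact ofRealCLM.differentiable.comp <|
    .const_add 1 <| (contDiff_norm_sq ℝ (n := 1)).differentiable one_ne_zero

theorem edth_eq_zero_iff (s : ℤ) (f : ℂ → ℂ) (z : ℂ) :
    edth s f z = 0 ↔ wirtDBar (fun w => (1 + ‖w‖ ^ 2 : ℂ) ^ s * f w) z = 0 := by
  simp [edth, zpow_ne_zero _ (one_add_sq_norm_ne_zero z)]

/-- A bounded `C¹` spin-weight-2 function on the sphere with `ð₂ f = 0` is of
the form `q(z)/(1+|z|²)²` with `deg q ≤ 4`; hence the five harmonics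
`₂Y_{2,m}` span the `ð`-kernel among regular spin-weight-2 functions. -/
theorem edth_two_kernel (f : ℂ → ℂ) (hf : ContDiff ℝ 1 f)
    (hbd : ∃ M : ℝ, ∀ z : ℂ, ‖f z‖ ≤ M)
    (hker : ∀ z : ℂ, edth 2 f z = 0) :
    ∃ q : Polynomial ℂ, q.degree ≤ 4 ∧
      ∀ z : ℂ, f z = q.eval z / (1 + ‖z‖ ^ 2 : ℂ) ^ 2 := by
  obtain ⟨M, hM⟩ := hbd
  let g : ℂ → ℂ := fun w => (1 + ‖w‖ ^ 2 : ℂ) ^ 2 * f w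
  have hg_real : Differentiable ℝ g :=
    (differentiable_one_add_sq_norm.pow 2).mul (hf.differentiable one_ne_zero)
  have hg_holo : Differentiable ℂ g := fun z =>
    differentiableAt_of_wirtDBar_eq_zero (hg_real z) <| by
      simpa using (edth_eq_zero_iff 2 f z).1 (hker z)
  have hg_growth : ∀ z, ‖g z‖ ≤ M * (1 + ‖z‖) ^ 4 := fun z => by
    rw [norm_mul, norm_pow, norm_one_add_sq_norm]
    calc (1 + ‖z‖ ^ 2) ^ 2 * ‖f z‖ ≤ ((1 + ‖z‖) ^ 2) ^ 2 * M := by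
          gcongr
          · nlinarith [norm_nonneg z]
          · exact hM z
      _ = M * (1 + ‖z‖) ^ 4 := by ring
  obtain ⟨q, hq_deg, hq⟩ := hg_holo.exists_polynomial_of_norm_le_mul_pow hg_growth
  refine ⟨q, mod_cast hq_deg, fun z => ?_⟩
  rw [eq_div_iff (pow_ne_zero 2 (one_add_sq_norm_ne_zero z)), ← hq z, mul_comm]
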